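/- arXiv:2602.21277 — 4 statements merged into one kernel-verified Lean document; each statement's English description precedes it below -/
import Mathlib

section
/- Let n be a positive integer and p, q ∈ (0,1]. Let N, V₁, V₂, … be mutually independent random variables, where N has the Binomial(n, p) distribution and each Vᵢ has the geometric distribution on the positive integers with parameter q, and set S := ∑_{i=1}^{N} Vᵢ (with S := 0 on {N = 0}). Then for every real θ ≥ 0: (i) if θ ≤ np/q then ℙ(S ≤ θ) ≤ exp(−(√(np) − √(θq))²); and (ii) if θ ≥ np/q then ℙ(S ≥ θ) ≤ exp(−(√(θq) − √(np))²). -/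
/-!
Chernoff's method with generating functions. As `N` is independent of the i.i.d. `Vᵢ`,
`𝔼[u^S] = 𝔼[G(u)^N] = (1 - p + p G(u))ⁿ`, where `G(u) = qu / (1 - (1 - q)u)` is the generating
function of the geometric law. Markov's inequality for `u^S`, with `u ≤ 1` for the lower tail and
`u ≥ 1` for the upper one, bounds both tails by `(1 - p + p G(u))ⁿ u^(-θ)`. Writing
`u⁻¹ = 1 - q + cq`, so that `G(u) = c⁻¹`, and using `1 + x ≤ eˣ` twice bounds this by
`exp(np (c⁻¹ - 1) + θq (c - 1))`, which equals `exp(-(√(θq) - √(np))²)` for `c = √(np) / √(θq)`;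
and then `u ≤ 1` iff `c ≥ 1` iff `θ ≤ np/q`.
-/

open MeasureTheory ProbabilityTheory Finset Real
open scoped ENNReal

noncomputable def geomPGF (q u : ℝ) : ℝ := q * u / (1 - (1 - q) * u)

def HasGeometricLaw {Ω : Type*} [MeasurableSpace Ω] (μ : Measure Ω) (q : ℝ) (X : Ω → ℕ) :
    Prop :=
  ∀ m : ℕ, 1 ≤ m → μ {ω | X ω = m} = ENNReal.ofReal (q * (1 - q) ^ (m - 1))

def HasBinomialLaw {Ω : Type*} [MeasurableSpace Ω] (μ : Measure Ω) (n : ℕ) (p : ℝ)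
    (X : Ω → ℕ) : Prop :=
  ∀ m : ℕ, μ {ω | X ω = m} = ENNReal.ofReal ((n.choose m : ℝ) * p ^ m * (1 - p) ^ (n - m))

lemma one_add_rpow_le_exp {y t : ℝ} (hy : 0 ≤ 1 + y) (ht : 0 ≤ t) :
    (1 + y) ^ t ≤ exp (t * y) :=
  calc (1 + y) ^ t ≤ exp y ^ t := rpow_le_rpow hy (by linarith [add_one_le_exp y]) ht
    _ = exp (t * y) := by rw [← exp_mul, mul_comm]

lemma ENNReal.tsum_ofReal_mul_pow {a r : ℝ} (ha : 0 ≤ a) (hr₀ : 0 ≤ r) (hr₁ : r < 1) :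
    ∑' m : ℕ, ENNReal.ofReal (a * r ^ m) = ENNReal.ofReal (a / (1 - r)) := by
  rw [← ENNReal.ofReal_tsum_of_nonneg (fun m => by positivity)
    ((summable_geometric_of_lt_one hr₀ hr₁).mul_left a), tsum_mul_left,
    tsum_geometric_of_lt_one hr₀ hr₁, div_eq_mul_inv]

lemma geomPGF_nonneg {q u : ℝ} (hq : 0 ≤ q) (hu₀ : 0 ≤ u) (hu₁ : (1 - q) * u < 1) :
    0 ≤ geomPGF q u :=
  div_nonneg (mul_nonneg hq hu₀) (by linarith)

section Probability

variable {Ω : Type*} [MeasurableSpace Ω] {μ : Measure Ω}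

lemma lintegral_comp_eq_tsum {X : Ω → ℕ} (hX : Measurable X) (g : ℕ → ℝ≥0∞) :
    ∫⁻ ω, g (X ω) ∂μ = ∑' m, g m * μ {ω | X ω = m} := by
  rw [← lintegral_map measurable_from_top hX, lintegral_countable' g]
  refine tsum_congr fun m => ?_
  rw [Measure.map_apply hX (measurableSet_singleton m)]
  rfl

lemma measurable_sum_range {N : Ω → ℕ} {V : ℕ → Ω → ℕ} (hN : Measurable N)
    (hV : ∀ i, Measurable (V i)) : Measurable fun ω => ∑ i ∈ range (N ω), V i ω := by
  have : Measurable fun x : Ω × ℕ => ∑ i ∈ range x.2, V i x.1 :=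
    measurable_from_prod_countable_left fun k => Finset.measurable_sum (range k) fun i _ => hV i
  exact this.comp (measurable_id.prodMk hN)

lemma lintegral_pow_eq_measure_zero_add_geomPGF {q u : ℝ} (hq₀ : 0 ≤ q) (hq₁ : q ≤ 1)
    (hu₀ : 0 ≤ u) (hu₁ : (1 - q) * u < 1) {X : Ω → ℕ} (hX : Measurable X)
    (hlaw : HasGeometricLaw μ q X) :
    ∫⁻ ω, ENNReal.ofReal u ^ X ω ∂μ = μ {ω | X ω = 0} + ENNReal.ofReal (geomPGF q u) := by
  have hterm : ∀ m : ℕ, ENNReal.ofReal u ^ (m + 1) * μ {ω | X ω = m + 1}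
      = ENNReal.ofReal (q * u * ((1 - q) * u) ^ m) := by
    intro m
    rw [hlaw (m + 1) (Nat.le_add_left 1 m), Nat.add_sub_cancel, ← ENNReal.ofReal_pow hu₀,
      ← ENNReal.ofReal_mul (by positivity), mul_pow]
    ring_nf
  rw [lintegral_comp_eq_tsum hX, tsum_eq_zero_add' ENNReal.summable, pow_zero, one_mul]
  simp only [hterm]
  rw [ENNReal.tsum_ofReal_mul_pow (by positivity) (by nlinarith) hu₁, geomPGF]

lemma measure_eq_zero_of_hasGeometricLaw [IsProbabilityMeasure μ] {q : ℝ} (hq₀ : 0 < q)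
    (hq₁ : q ≤ 1) {X : Ω → ℕ} (hX : Measurable X) (hlaw : HasGeometricLaw μ q X) :
    μ {ω | X ω = 0} = 0 := by
  have h := lintegral_pow_eq_measure_zero_add_geomPGF hq₀.le hq₁ zero_le_one (by linarith) hX hlaw
  simp only [ENNReal.ofReal_one, one_pow, lintegral_const, measure_univ, mul_one, geomPGF] at h
  rw [sub_sub_cancel, div_self hq₀.ne', ENNReal.ofReal_one] at h
  exact (ENNReal.add_left_inj ENNReal.one_ne_top).1 (h.symm.trans (zero_add 1).symm)

lemma lintegral_pow_of_hasGeometricLaw [IsProbabilityMeasure μ] {q u : ℝ} (hq₀ : 0 < q)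
    (hq₁ : q ≤ 1) (hu₀ : 0 ≤ u) (hu₁ : (1 - q) * u < 1) {X : Ω → ℕ} (hX : Measurable X)
    (hlaw : HasGeometricLaw μ q X) :
    ∫⁻ ω, ENNReal.ofReal u ^ X ω ∂μ = ENNReal.ofReal (geomPGF q u) := by
  rw [lintegral_pow_eq_measure_zero_add_geomPGF hq₀.le hq₁ hu₀ hu₁ hX hlaw,
    measure_eq_zero_of_hasGeometricLaw hq₀ hq₁ hX hlaw, zero_add]

lemma lintegral_pow_of_hasBinomialLaw {n : ℕ} {p x : ℝ} (hp₀ : 0 ≤ p) (hp₁ : p ≤ 1)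
    (hx : 0 ≤ x) {X : Ω → ℕ} (hX : Measurable X) (hlaw : HasBinomialLaw μ n p X) :
    ∫⁻ ω, ENNReal.ofReal x ^ X ω ∂μ = ENNReal.ofReal ((1 - p + p * x) ^ n) := by
  have hterm : ∀ m, ENNReal.ofReal x ^ m * μ {ω | X ω = m}
      = ENNReal.ofReal ((p * x) ^ m * (1 - p) ^ (n - m) * n.choose m) := by
    intro m
    rw [hlaw, ← ENNReal.ofReal_pow hx, ← ENNReal.ofReal_mul (by positivity), mul_pow]
    ring_nf
  rw [lintegral_comp_eq_tsum hX]
  simp only [hterm]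
  rw [tsum_eq_sum (s := range (n + 1)) fun m hm => by
      rw [Nat.choose_eq_zero_of_lt (by simpa using hm)]; simp,
    ← ENNReal.ofReal_sum_of_nonneg fun m _ => by
      have := sub_nonneg.2 hp₁
      positivity,
    show 1 - p + p * x = p * x + (1 - p) by ring, add_pow]

lemma lintegral_pow_sum_range {N : Ω → ℕ} {V : ℕ → Ω → ℕ} (hN : Measurable N)
    (hV : ∀ i, Measurable (V i)) (hindep : iIndepFun (fun o : Option ℕ => o.elim N V) μ)
    {c G : ℝ≥0∞} (hG : ∀ i, ∫⁻ ω, c ^ V i ω ∂μ = G) :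
    ∫⁻ ω, c ^ (∑ i ∈ range (N ω), V i ω) ∂μ = ∫⁻ ω, G ^ N ω ∂μ := by
  let g (k : ℕ) (o : Option ℕ) : ℕ → ℝ≥0∞ :=
    o.elim (({k} : Set ℕ).indicator fun _ => 1) fun _ m => c ^ m
  let F (k : ℕ) (ω : Ω) : ℝ≥0∞ := ∏ o ∈ insertNone (range k), g k o (o.elim N V ω)
  have hW : ∀ o : Option ℕ, Measurable (o.elim N V) := by
    rintro (_ | i)
    exacts [hN, hV i]
  have hF : ∀ k ω,
      F k ω = ({k} : Set ℕ).indicator (fun _ => 1) (N ω) * c ^ (∑ i ∈ range k, V i ω) := by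
    intro k ω
    rw [← prod_pow_eq_pow_sum]
    exact prod_insertNone _ _
  have hsum : ∀ ω, c ^ (∑ i ∈ range (N ω), V i ω) = ∑' k, F k ω := by
    intro ω
    rw [tsum_eq_single (N ω) fun k hk => by simp [hF, Ne.symm hk]]
    simp [hF]
  have hFint : ∀ k, ∫⁻ ω, F k ω ∂μ = G ^ k * μ {ω | N ω = k} := by
    intro k
    calc ∫⁻ ω, F k ω ∂μ = ∏ o ∈ insertNone (range k), ∫⁻ ω, g k o (o.elim N V ω) ∂μ :=
          lintegral_prod_eq_prod_lintegral_of_indepFun _ _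
            (hindep.comp (g k) fun _ => measurable_from_top)
            fun o => measurable_from_top.comp (hW o)
      _ = G ^ k * μ {ω | N ω = k} := by
          have hind : ∫⁻ ω, g k none (none.elim N V ω) ∂μ = μ {ω | N ω = k} :=
            (lintegral_indicator_const_comp hN (measurableSet_singleton k) 1).trans (one_mul _)
          have hgeo : ∀ i, ∫⁻ ω, g k (some i) ((some i).elim N V ω) ∂μ = G := hG
          rw [prod_insertNone, hind, prod_congr rfl fun i _ => hgeo i, prod_const, card_range,
            mul_comm]
  have hFmeas : ∀ k, Measurable (F k) := fun k =>
    Finset.measurable_prod _ fun o _ => measurable_from_top.comp (hW o)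
  simp only [hsum]
  rw [lintegral_tsum fun k => (hFmeas k).aemeasurable, lintegral_comp_eq_tsum hN]
  simp only [hFint]

lemma measure_le_ofReal_div_rpow {X : Ω → ℕ} (hX : Measurable X) {u θ A : ℝ} (hu : 0 ≤ u)
    (huθ : 0 < u ^ θ) (hA : ∫⁻ ω, ENNReal.ofReal u ^ X ω ∂μ = ENNReal.ofReal A) {s : Set Ω}
    (hs : ∀ ω ∈ s, u ^ θ ≤ u ^ (X ω : ℝ)) : μ s ≤ ENNReal.ofReal (A / u ^ θ) := by
  have hsub : s ⊆ {ω | ENNReal.ofReal (u ^ θ) ≤ ENNReal.ofReal u ^ X ω} := fun ω hω => by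
    rw [Set.mem_ofPred_eq, ← ENNReal.ofReal_pow hu, ← rpow_natCast]
    exact ENNReal.ofReal_le_ofReal (hs ω hω)
  calc μ s ≤ μ {ω | ENNReal.ofReal (u ^ θ) ≤ ENNReal.ofReal u ^ X ω} := measure_mono hsub
    _ ≤ (∫⁻ ω, ENNReal.ofReal u ^ X ω ∂μ) / ENNReal.ofReal (u ^ θ) :=
      meas_ge_le_lintegral_div (measurable_from_top.comp hX).aemeasurable
        (ENNReal.ofReal_pos.2 huθ).ne' ENNReal.ofReal_ne_top
    _ = ENNReal.ofReal (A / u ^ θ) := by rw [hA, ENNReal.ofReal_div_of_pos huθ]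

end Probability

lemma geomPGF_inv_one_sub_add_mul {q c : ℝ} (hq₀ : 0 < q) (hq₁ : q ≤ 1) (hc : 0 < c) :
    geomPGF q (1 - q + c * q)⁻¹ = c⁻¹ := by
  set d := 1 - q + c * q
  have hd : d ≠ 0 := (show 0 < d by linarith [mul_pos hc hq₀]).ne'
  have hden : 1 - (1 - q) * d⁻¹ = c * q * d⁻¹ := by
    field_simp
    linarith
  rw [geomPGF, hden]
  field_simp

lemma chernoff_exponent {a b : ℝ} (ha : 0 < a) (hb : 0 < b) :
    a * ((√a / √b)⁻¹ - 1) + b * (√a / √b - 1) = -(√b - √a) ^ 2 := by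
  obtain ⟨s, hs, rfl⟩ : ∃ s > 0, a = s ^ 2 := ⟨√a, sqrt_pos.2 ha, (sq_sqrt ha.le).symm⟩
  obtain ⟨t, ht, rfl⟩ : ∃ t > 0, b = t ^ 2 := ⟨√b, sqrt_pos.2 hb, (sq_sqrt hb.le).symm⟩
  rw [sqrt_sq hs.le, sqrt_sq ht.le]
  field_simp
  ring

lemma exists_chernoff_parameter {n : ℕ} (hn : 0 < n) {p q θ : ℝ} (hp : p ∈ Set.Ioc (0 : ℝ) 1)
    (hq : q ∈ Set.Ioc (0 : ℝ) 1) (hθ : 0 ≤ θ) :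
    ∃ u : ℝ, 0 ≤ u ∧ 0 < u ^ θ ∧ (1 - q) * u < 1 ∧ (θ ≤ n * p / q → u ≤ 1) ∧
      (n * p / q ≤ θ → 1 ≤ u) ∧
      (1 - p + p * geomPGF q u) ^ n / u ^ θ ≤ exp (-(√(θ * q) - √(n * p)) ^ 2) := by
  obtain ⟨hp₀, hp₁⟩ := hp
  obtain ⟨hq₀, hq₁⟩ := hq
  have ha : 0 < n * p := by positivity
  rcases hθ.eq_or_lt with rfl | hθ
  -- For `θ = 0` take `u = 0`: then `𝔼[u^S] = ℙ(S = 0)` and the bound reads `(1 - p)ⁿ ≤ e^(-np)`.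
  · refine ⟨0, le_rfl, by simp, by simp, fun _ => zero_le_one,
      fun h => absurd h (not_le.2 (by positivity)), ?_⟩
    have h := one_add_rpow_le_exp (y := -p) (by linarith) n.cast_nonneg
    rw [rpow_natCast, ← sub_eq_add_neg, mul_neg] at h
    rwa [geomPGF, mul_zero, zero_div, mul_zero, add_zero, rpow_zero, div_one, zero_mul, sqrt_zero,
      zero_sub, neg_sq, sq_sqrt ha.le]
  have hb : 0 < θ * q := by positivity
  set c := √(n * p) / √(θ * q) with hc_def
  have hc : 0 < c := by positivity
  have hd : 0 < 1 - q + c * q := by linarith [mul_pos hc hq₀]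
  refine ⟨(1 - q + c * q)⁻¹, (inv_pos.2 hd).le, rpow_pos_of_pos (inv_pos.2 hd) θ, ?_, ?_, ?_, ?_⟩
  · rw [← div_eq_mul_inv, div_lt_one hd]
    linarith [mul_pos hc hq₀]
  · intro h
    have : 1 ≤ c := (one_le_div (sqrt_pos.2 hb)).2 (sqrt_le_sqrt ((le_div_iff₀ hq₀).1 h))
    exact inv_le_one_of_one_le₀ (by nlinarith)
  · intro h
    have : c ≤ 1 := (div_le_one (sqrt_pos.2 hb)).2 (sqrt_le_sqrt ((div_le_iff₀ hq₀).1 h))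
    exact (one_le_inv₀ hd).2 (by nlinarith)
  · rw [geomPGF_inv_one_sub_add_mul hq₀ hq₁ hc, inv_rpow hd.le, div_inv_eq_mul]
    calc (1 - p + p * c⁻¹) ^ n * (1 - q + c * q) ^ θ
        ≤ exp (n * (p * (c⁻¹ - 1))) * exp (θ * (q * (c - 1))) := by
          refine mul_le_mul ?_ ?_ (by positivity) (exp_pos _).le
          · rw [show 1 - p + p * c⁻¹ = 1 + p * (c⁻¹ - 1) by ring, ← rpow_natCast]
            exact one_add_rpow_le_exp (by nlinarith [mul_pos hp₀ (inv_pos.2 hc)]) n.cast_nonneg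
          · rw [show 1 - q + c * q = 1 + q * (c - 1) by ring]
            exact one_add_rpow_le_exp (by linarith) hθ.le
      _ = exp (-(√(θ * q) - √(n * p)) ^ 2) := by
          rw [← exp_add, ← chernoff_exponent ha hb, ← hc_def]
          ring_nf

/-- Tail bounds for the Binomial–Geometric compound distribution
`S = ∑_{i=1}^N Vᵢ`, where `N ~ Binomial(n,p)` and the `Vᵢ` are geometric on the positive
integers with parameter `q`, all mutually independent. -/
theorem statement1 {Ω : Type*} [MeasureSpace Ω] [IsProbabilityMeasure (ℙ : Measure Ω)]
    (n : ℕ) (hn : 0 < n) (p q : ℝ) (hp : p ∈ Set.Ioc (0 : ℝ) 1) (hq : q ∈ Set.Ioc (0 : ℝ) 1)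
    (N : Ω → ℕ) (V : ℕ → Ω → ℕ)
    (hNmeas : Measurable N) (hVmeas : ∀ i, Measurable (V i))
    (hIndep : iIndepFun
      (fun o : Option ℕ => o.elim N V) ℙ)
    (hN : ∀ m : ℕ, ℙ {ω | N ω = m}
      = ENNReal.ofReal ((n.choose m : ℝ) * p ^ m * (1 - p) ^ (n - m)))
    (hV : ∀ i, ∀ m : ℕ, 1 ≤ m →
      ℙ {ω | V i ω = m} = ENNReal.ofReal (q * (1 - q) ^ (m - 1)))
    (S : Ω → ℕ) (hS : ∀ ω, S ω = ∑ i ∈ Finset.range (N ω), V i ω)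
    (θ : ℝ) (hθ : 0 ≤ θ) :
    (θ ≤ n * p / q →
      ℙ {ω | (S ω : ℝ) ≤ θ}
        ≤ ENNReal.ofReal (Real.exp (-(Real.sqrt (n * p) - Real.sqrt (θ * q)) ^ 2)))
    ∧ (n * p / q ≤ θ →
      ℙ {ω | θ ≤ (S ω : ℝ)}
        ≤ ENNReal.ofReal (Real.exp (-(Real.sqrt (θ * q) - Real.sqrt (n * p)) ^ 2))) := by
  obtain rfl : S = fun ω => ∑ i ∈ range (N ω), V i ω := funext hS
  have hSmeas := measurable_sum_range hNmeas hVmeas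
  have hpgf : ∀ u, 0 ≤ u → (1 - q) * u < 1 →
      ∫⁻ ω, ENNReal.ofReal u ^ (∑ i ∈ range (N ω), V i ω) ∂ℙ
        = ENNReal.ofReal ((1 - p + p * geomPGF q u) ^ n) := fun u hu₀ hu₁ => by
    rw [lintegral_pow_sum_range hNmeas hVmeas hIndep fun i =>
        lintegral_pow_of_hasGeometricLaw hq.1 hq.2 hu₀ hu₁ (hVmeas i) (hV i),
      lintegral_pow_of_hasBinomialLaw hp.1.le hp.2 (geomPGF_nonneg hq.1.le hu₀ hu₁)
        hNmeas hN]
  obtain ⟨u, hu₀, huθ, hu₁, hle, hge, hbound⟩ := exists_chernoff_parameter hn hp hq hθ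
  refine ⟨fun hθle => ?_, fun hθge => ?_⟩
  · refine (measure_le_ofReal_div_rpow hSmeas hu₀ huθ (hpgf u hu₀ hu₁) fun ω hω =>
      rpow_le_rpow_of_exponent_ge' hu₀ (hle hθle) (Nat.cast_nonneg _) hω).trans ?_
    rw [sub_sq_comm]
    exact ENNReal.ofReal_le_ofReal hbound
  · exact (measure_le_ofReal_div_rpow hSmeas hu₀ huθ (hpgf u hu₀ hu₁) fun ω hω =>
      rpow_le_rpow_of_exponent_le (hge hθge) hω).trans (ENNReal.ofReal_le_ofReal hbound)
end

section
/- Let n be a positive integer, p ∈ (0,1] and λ > 0. Let N, V₁, V₂, … be mutually independent random variables, where N has the Binomial(n, p) distribution and each Vᵢ has the exponential distribution with rate λ, and set S := ∑_{i=1}^{N} Vᵢ (with S := 0 on {N = 0}). Then for every real θ ≥ 0: (i) if θ ≤ np/λ then ℙ(S ≤ θ) ≤ exp(−(√(np) − √(θλ))²); and (ii) if θ ≥ np/λ then ℙ(S ≥ θ) ≤ exp(−(√(θλ) − √(np))²). -/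
/-!
Chernoff's method. Conditioning on `N` and using independence, for `t < λ`
`𝔼 e^{tS} = (1 - p + p λ/(λ - t))ⁿ ≤ exp (n p (λ/(λ - t) - 1))` by `1 + x ≤ eˣ`, so Markov's
inequality gives `ℙ(tS ≥ tθ) ≤ exp (-tθ + n p (λ/(λ - t) - 1))`. At `t = λ (1 - √(np) / √(θλ))`
the exponent equals `-(√(θλ) - √(np))²`, and `t ≤ 0` or `t ≥ 0` according as `θ ≤ np/λ` or
`θ ≥ np/λ`, which yields the lower and the upper tail. The case `θ = 0` follows by letting `θ ↓ 0`.
-/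

open MeasureTheory ProbabilityTheory Real Set
open scoped ENNReal

lemma map_eq_expMeasure {Ω : Type*} [MeasurableSpace Ω] {μ : Measure Ω} [IsProbabilityMeasure μ]
    {W : Ω → ℝ} (hW : Measurable W) {lam : ℝ} (hlam : 0 < lam)
    (htail : ∀ t, 0 ≤ t → μ {ω | t < W ω} = ENNReal.ofReal (exp (-lam * t))) :
    μ.map W = expMeasure lam := by
  have := isProbabilityMeasure_expMeasure hlam
  have := Measure.isProbabilityMeasure_map (μ := μ) hW.aemeasurable
  have hcdf : ∀ x, 0 ≤ x → μ.real {ω | W ω ≤ x} = 1 - exp (-(lam * x)) := fun x hx => by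
    rw [show {ω | W ω ≤ x} = {ω | x < W ω}ᶜ by ext; simp,
      probReal_compl_eq_one_sub (measurableSet_lt measurable_const hW), measureReal_def,
      htail x hx, ENNReal.toReal_ofReal (exp_nonneg _), neg_mul]
  refine Measure.eq_of_cdf _ _ ?_
  ext x
  rw [cdf_expMeasure_eq hlam, cdf_eq_real, map_measureReal_apply hW measurableSet_Iic]
  split_ifs with hx
  · exact hcdf x hx
  · refine le_antisymm ?_ measureReal_nonneg
    calc μ.real (W ⁻¹' Iic x) ≤ μ.real {ω | W ω ≤ 0} :=
          measureReal_mono fun ω (hω : W ω ≤ x) => (show W ω ≤ 0 by linarith)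
      _ = 0 := by simp [hcdf 0 le_rfl]

lemma lintegral_exp_mul_expMeasure {lam t : ℝ} (hlam : 0 < lam) (ht : t < lam) :
    ∫⁻ x, ENNReal.ofReal (exp (t * x)) ∂expMeasure lam = ENNReal.ofReal (lam / (lam - t)) := by
  have hdensity : ∀ x, exponentialPDF lam x * ENNReal.ofReal (exp (t * x))
      = (Ici 0).indicator (fun x => ENNReal.ofReal (lam * exp ((t - lam) * x))) x := fun x => by
    by_cases hx : 0 ≤ x
    · rw [exponentialPDF_of_nonneg hx, indicator_of_mem (mem_Ici.2 hx),
        ← ENNReal.ofReal_mul (by positivity), mul_assoc, ← exp_add]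
      ring_nf
    · rw [exponentialPDF_of_neg (not_le.1 hx), indicator_of_notMem (by simpa using hx), zero_mul]
  have hint : IntegrableOn (fun x => lam * exp ((t - lam) * x)) (Ioi 0) :=
    (integrableOn_exp_mul_Ioi (by linarith) 0).const_mul lam
  calc ∫⁻ x, ENNReal.ofReal (exp (t * x)) ∂expMeasure lam
      = ∫⁻ x in Ioi 0, ENNReal.ofReal (lam * exp ((t - lam) * x)) := by
        change ∫⁻ x, _ ∂volume.withDensity (exponentialPDF lam) = _
        rw [lintegral_withDensity_eq_lintegral_mul _
          (show Measurable (exponentialPDF lam) from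
            (measurable_exponentialPDFReal lam).ennreal_ofReal) (by fun_prop)]
        simp only [Pi.mul_apply, hdensity]
        rw [lintegral_indicator measurableSet_Ici, setLIntegral_congr Ioi_ae_eq_Ici]
    _ = ENNReal.ofReal (∫ x in Ioi 0, lam * exp ((t - lam) * x)) :=
        (ofReal_integral_eq_lintegral_ofReal hint (ae_of_all _ fun x => by positivity)).symm
    _ = ENNReal.ofReal (lam / (lam - t)) := by
        rw [integral_const_mul, integral_exp_mul_Ioi (by linarith), mul_zero, exp_zero, neg_div,
          ← div_neg, neg_sub, mul_one_div]

section RandomSum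

variable {Ω : Type*} [MeasurableSpace Ω] {μ : Measure Ω} {N : Ω → ℕ} {V : ℕ → Ω → ℝ}

lemma measurable_randomSum (hN : Measurable N) (hV : ∀ i, Measurable (V i)) :
    Measurable fun ω => ∑ i ∈ Finset.range (N ω), V i ω :=
  (measurable_from_prod_countable_left (f := fun q : Ω × ℕ => ∑ i ∈ Finset.range q.2, V i q.1)
    fun m => Finset.measurable_sum (Finset.range m) fun i _ => hV i).comp (measurable_id.prodMk hN)

lemma lintegral_indicator_mul_prod_exp (hN : Measurable N) (hV : ∀ i, Measurable (V i))
    (hindep : iIndepFun (fun o : Option ℕ => o.elim (fun ω => (N ω : ℝ)) V) μ) (t : ℝ) (m k : ℕ) :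
    ∫⁻ ω, {ω | N ω = m}.indicator 1 ω * ∏ i ∈ Finset.range k, ENNReal.ofReal (exp (t * V i ω)) ∂μ
      = μ {ω | N ω = m} * ∏ i ∈ Finset.range k, ∫⁻ ω, ENNReal.ofReal (exp (t * V i ω)) ∂μ := by
  let g : Option ℕ → ℝ → ℝ≥0∞ := fun o =>
    o.elim (({(m : ℝ)} : Set ℝ).indicator 1) fun _ x => ENNReal.ofReal (exp (t * x))
  have hg : ∀ o, Measurable (g o) := by
    rintro (_ | i)
    · exact measurable_one.indicator (measurableSet_singleton _)
    · exact (measurable_const.mul measurable_id).exp.ennreal_ofReal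
  have hF : ∀ o, Measurable (g o ∘ o.elim (fun ω => (N ω : ℝ)) V) := by
    rintro (_ | i)
    · exact (hg none).comp (measurable_from_top.comp hN)
    · exact (hg (some i)).comp (hV i)
  have hprod := lintegral_prod_eq_prod_lintegral_of_indepFun (Finset.insertNone (Finset.range k))
    _ (hindep.comp g hg) hF
  have hind : ∀ ω, ({(m : ℝ)} : Set ℝ).indicator (1 : ℝ → ℝ≥0∞) (N ω)
      = {ω | N ω = m}.indicator 1 ω := fun ω => by
    simp only [indicator, mem_singleton_iff, Nat.cast_inj, mem_ofPred_eq, Pi.one_apply]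
  simp only [Finset.prod_insertNone, Function.comp_apply, Option.elim, g, hind] at hprod
  rwa [lintegral_indicator_one (s := {ω | N ω = m}) (hN (measurableSet_singleton m))] at hprod

lemma lintegral_exp_mul_randomSum (hN : Measurable N) (hV : ∀ i, Measurable (V i))
    (hindep : iIndepFun (fun o : Option ℕ => o.elim (fun ω => (N ω : ℝ)) V) μ)
    {t : ℝ} {r : ℝ≥0∞} (hr : ∀ i, ∫⁻ ω, ENNReal.ofReal (exp (t * V i ω)) ∂μ = r) :
    ∫⁻ ω, ENNReal.ofReal (exp (t * ∑ i ∈ Finset.range (N ω), V i ω)) ∂μ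
      = ∑' m, μ {ω | N ω = m} * r ^ m := by
  have hsplit : ∀ ω, ENNReal.ofReal (exp (t * ∑ i ∈ Finset.range (N ω), V i ω))
      = ∑' m, {ω | N ω = m}.indicator 1 ω
          * ∏ i ∈ Finset.range m, ENNReal.ofReal (exp (t * V i ω)) := fun ω => by
    rw [tsum_eq_single (N ω) fun m hm => by simp [indicator, Ne.symm hm]]
    simp only [indicator, mem_ofPred_eq, if_true, Pi.one_apply, one_mul, Finset.mul_sum, exp_sum,
      ENNReal.ofReal_prod_of_nonneg fun i _ => (exp_nonneg _)]
  have hmeas : ∀ m, AEMeasurable (fun ω => {ω | N ω = m}.indicator 1 ω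
      * ∏ i ∈ Finset.range m, ENNReal.ofReal (exp (t * V i ω))) μ := fun m =>
    ((measurable_one.indicator (hN (measurableSet_singleton m))).mul
      (Finset.measurable_prod _ fun i _ => ((hV i).const_mul t).exp.ennreal_ofReal)).aemeasurable
  simp_rw [hsplit, lintegral_tsum hmeas, lintegral_indicator_mul_prod_exp hN hV hindep, hr,
    Finset.prod_const, Finset.card_range]

end RandomSum

lemma tsum_binomial_mul_pow {n : ℕ} {p x : ℝ} (hp0 : 0 ≤ p) (hp1 : p ≤ 1) (hx : 0 ≤ x) :
    ∑' m, ENNReal.ofReal (n.choose m * p ^ m * (1 - p) ^ (n - m)) * ENNReal.ofReal x ^ m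
      = ENNReal.ofReal ((1 - p + p * x) ^ n) := by
  have hq : 0 ≤ 1 - p := by linarith
  rw [tsum_eq_sum (s := Finset.range (n + 1)) fun m hm => by
      simp [Nat.choose_eq_zero_of_lt (by simpa using hm)],
    add_comm (1 - p), add_pow, ENNReal.ofReal_sum_of_nonneg fun m _ => by positivity]
  refine Finset.sum_congr rfl fun m _ => ?_
  rw [← ENNReal.ofReal_pow hx, ← ENNReal.ofReal_mul (by positivity)]
  congr 1
  ring

lemma measure_ge_le_exp_neg_mul_lintegral_exp {Ω : Type*} [MeasurableSpace Ω] {μ : Measure Ω}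
    {Y : Ω → ℝ} (hY : AEMeasurable Y μ) (c : ℝ) :
    μ {ω | c ≤ Y ω} ≤ ENNReal.ofReal (exp (-c)) * ∫⁻ ω, ENNReal.ofReal (exp (Y ω)) ∂μ := by
  have hmarkov := mul_meas_ge_le_lintegral₀ (μ := μ)
    (hY.exp.ennreal_ofReal) (ENNReal.ofReal (exp c))
  calc μ {ω | c ≤ Y ω}
      = ENNReal.ofReal (exp (-c)) * (ENNReal.ofReal (exp c) * μ {ω | c ≤ Y ω}) := by
        rw [← mul_assoc, ← ENNReal.ofReal_mul (exp_nonneg _), ← exp_add, neg_add_cancel, exp_zero,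
          ENNReal.ofReal_one, one_mul]
    _ ≤ ENNReal.ofReal (exp (-c)) * ∫⁻ ω, ENNReal.ofReal (exp (Y ω)) ∂μ := by
        gcongr
        refine le_trans (mul_le_mul_right (measure_mono fun ω hω => ?_) _) hmarkov
        exact ENNReal.ofReal_le_ofReal (exp_le_exp.2 hω)

/-- The minimiser `t` of `-tθ + np(λ/(λ - t) - 1)`, the exponent of the Chernoff bound. -/
noncomputable def chernoffParam (n : ℕ) (p lam θ : ℝ) : ℝ :=
  lam * (1 - √(n * p) / √(θ * lam))

section ChernoffParam

variable {n : ℕ} {p lam θ : ℝ}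

lemma sub_chernoffParam : lam - chernoffParam n p lam θ = lam * √(n * p) / √(θ * lam) := by
  rw [chernoffParam]
  ring

lemma chernoffParam_lt (hnp : 0 < n * p) (hlam : 0 < lam) (hθ : 0 < θ) :
    chernoffParam n p lam θ < lam := by
  have : 0 < lam * √(n * p) / √(θ * lam) := by positivity
  linarith [sub_chernoffParam (n := n) (p := p) (lam := lam) (θ := θ)]

lemma chernoffParam_nonpos (hlam : 0 < lam) (hθ : 0 < θ) (hθ' : θ ≤ n * p / lam) :
    chernoffParam n p lam θ ≤ 0 := by
  have hle : √(θ * lam) ≤ √(n * p) := sqrt_le_sqrt ((le_div_iff₀ hlam).1 hθ')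
  have := (one_le_div (sqrt_pos.2 (by positivity))).2 hle
  exact mul_nonpos_of_nonneg_of_nonpos hlam.le (by linarith)

lemma chernoffParam_nonneg (hlam : 0 < lam) (hθ : n * p / lam ≤ θ) :
    0 ≤ chernoffParam n p lam θ := by
  have hle : √(n * p) ≤ √(θ * lam) := sqrt_le_sqrt ((div_le_iff₀ hlam).1 hθ)
  exact mul_nonneg hlam.le (sub_nonneg.2 (div_le_one_of_le₀ hle (sqrt_nonneg _)))

lemma exp_neg_chernoffParam_mul_le (hp0 : 0 ≤ p) (hp1 : p ≤ 1) (hnp : 0 < n * p)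
    (hlam : 0 < lam) (hθ : 0 < θ) :
    exp (-(chernoffParam n p lam θ * θ))
        * (1 - p + p * (lam / (lam - chernoffParam n p lam θ))) ^ n
      ≤ exp (-(√(θ * lam) - √(n * p)) ^ 2) := by
  rw [sub_chernoffParam, chernoffParam]
  have hu : 0 < √(n * p) := sqrt_pos.2 hnp
  have hu2 : √(n * p) ^ 2 = n * p := sq_sqrt hnp.le
  have hv : 0 < √(θ * lam) := sqrt_pos.2 (by positivity)
  have hv2 : √(θ * lam) ^ 2 = θ * lam := sq_sqrt (by positivity)
  generalize √(n * p) = u at hu hu2 ⊢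
  generalize √(θ * lam) = v at hv hv2 ⊢
  have hbase : 1 - p + p * (lam / (lam * u / v)) = 1 + p * (v / u - 1) := by
    field_simp
    ring
  have hpow : (1 + p * (v / u - 1)) ^ n ≤ exp (n * p * (v / u - 1)) := by
    rw [mul_assoc, exp_nat_mul]
    refine pow_le_pow_left₀ ?_ (by linarith [add_one_le_exp (p * (v / u - 1))]) n
    nlinarith [div_nonneg hv.le hu.le]
  have hθ' : θ = v ^ 2 / lam := by field_simp; linarith
  calc exp (-(lam * (1 - u / v) * θ)) * (1 - p + p * (lam / (lam * u / v))) ^ n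
      ≤ exp (-(lam * (1 - u / v) * θ)) * exp (n * p * (v / u - 1)) := by
        rw [hbase]
        gcongr
    _ = exp (-(v - u) ^ 2) := by
        rw [← exp_add, ← hu2, hθ']
        congr 1
        field_simp
        ring

/-- In `indep`, the index `none` stands for `N` and `some i` for `Vᵢ`. -/
structure IsBinomialExpCompound {Ω : Type*} [MeasurableSpace Ω] (μ : Measure Ω) (N : Ω → ℕ)
    (V : ℕ → Ω → ℝ) (S : Ω → ℝ) (n : ℕ) (p lam : ℝ) : Prop where
  measurable_count : Measurable N
  measurable_summand : ∀ i, Measurable (V i)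
  indep : iIndepFun (fun o : Option ℕ => o.elim (fun ω => (N ω : ℝ)) V) μ
  count_eq : ∀ m : ℕ,
    μ {ω | N ω = m} = ENNReal.ofReal ((n.choose m : ℝ) * p ^ m * (1 - p) ^ (n - m))
  summand_tail : ∀ i, ∀ t : ℝ, 0 ≤ t → μ {ω | t < V i ω} = ENNReal.ofReal (exp (-lam * t))
  sum_eq : ∀ ω, S ω = ∑ i ∈ Finset.range (N ω), V i ω

namespace IsBinomialExpCompound

variable {Ω : Type*} [MeasurableSpace Ω] {μ : Measure Ω} {N : Ω → ℕ} {V : ℕ → Ω → ℝ}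
  {S : Ω → ℝ} {n : ℕ} {p lam θ : ℝ}

lemma measurable_sum (h : IsBinomialExpCompound μ N V S n p lam) : Measurable S :=
  (funext h.sum_eq).symm ▸ measurable_randomSum h.measurable_count h.measurable_summand

lemma lintegral_exp_mul (h : IsBinomialExpCompound μ N V S n p lam) (hp0 : 0 ≤ p) (hp1 : p ≤ 1)
    (hlam : 0 < lam) {t : ℝ} (ht : t < lam) :
    ∫⁻ ω, ENNReal.ofReal (exp (t * S ω)) ∂μ
      = ENNReal.ofReal ((1 - p + p * (lam / (lam - t))) ^ n) := by
  have := h.indep.isProbabilityMeasure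
  have hsummand : ∀ i, ∫⁻ ω, ENNReal.ofReal (exp (t * V i ω)) ∂μ
      = ENNReal.ofReal (lam / (lam - t)) := fun i => by
    rw [← lintegral_map (f := fun x => ENNReal.ofReal (exp (t * x))) (by fun_prop)
      (h.measurable_summand i), map_eq_expMeasure (h.measurable_summand i) hlam
      (h.summand_tail i), lintegral_exp_mul_expMeasure hlam ht]
  simp_rw [h.sum_eq, lintegral_exp_mul_randomSum h.measurable_count h.measurable_summand h.indep
    hsummand, h.count_eq]
  exact tsum_binomial_mul_pow hp0 hp1 (div_nonneg hlam.le (sub_pos.2 ht).le)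

lemma measure_chernoffParam_mul_le (h : IsBinomialExpCompound μ N V S n p lam) (hp0 : 0 ≤ p)
    (hp1 : p ≤ 1) (hnp : 0 < n * p) (hlam : 0 < lam) (hθ : 0 < θ) :
    μ {ω | chernoffParam n p lam θ * θ ≤ chernoffParam n p lam θ * S ω}
      ≤ ENNReal.ofReal (exp (-(√(θ * lam) - √(n * p)) ^ 2)) := by
  set t := chernoffParam n p lam θ
  calc μ {ω | t * θ ≤ t * S ω}
      ≤ ENNReal.ofReal (exp (-(t * θ))) * ∫⁻ ω, ENNReal.ofReal (exp (t * S ω)) ∂μ :=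
        measure_ge_le_exp_neg_mul_lintegral_exp (h.measurable_sum.const_mul t).aemeasurable _
    _ = ENNReal.ofReal (exp (-(t * θ)) * (1 - p + p * (lam / (lam - t))) ^ n) := by
        rw [h.lintegral_exp_mul hp0 hp1 hlam (chernoffParam_lt hnp hlam hθ),
          ENNReal.ofReal_mul (exp_nonneg _)]
    _ ≤ ENNReal.ofReal (exp (-(√(θ * lam) - √(n * p)) ^ 2)) :=
        ENNReal.ofReal_le_ofReal (exp_neg_chernoffParam_mul_le hp0 hp1 hnp hlam hθ)

lemma measure_le_le (h : IsBinomialExpCompound μ N V S n p lam) (hp0 : 0 ≤ p) (hp1 : p ≤ 1)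
    (hnp : 0 < n * p) (hlam : 0 < lam) (hθ : 0 ≤ θ) (hθ' : θ ≤ n * p / lam) :
    μ {ω | S ω ≤ θ} ≤ ENNReal.ofReal (exp (-(√(n * p) - √(θ * lam)) ^ 2)) := by
  have hpos : ∀ θ, 0 < θ → θ ≤ n * p / lam →
      μ {ω | S ω ≤ θ} ≤ ENNReal.ofReal (exp (-(√(n * p) - √(θ * lam)) ^ 2)) := fun θ hθ hθ' => by
    rw [← neg_sub, neg_sq]
    refine (measure_mono fun ω (hω : S ω ≤ θ) => ?_).trans
      (h.measure_chernoffParam_mul_le hp0 hp1 hnp hlam hθ)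
    exact mul_le_mul_of_nonpos_left hω (chernoffParam_nonpos hlam hθ hθ')
  rcases hθ.eq_or_lt with rfl | hθ
  · -- `{S ≤ 0} ⊆ {S ≤ θ}` for small `θ > 0`, and the bound is continuous in `θ`
    have hcont : Continuous fun θ => ENNReal.ofReal (exp (-(√(n * p) - √(θ * lam)) ^ 2)) :=
      ENNReal.continuous_ofReal.comp (by fun_prop)
    refine ge_of_tendsto ((hcont.tendsto 0).mono_left (nhdsWithin_le_nhds (s := Ioi 0))) ?_
    filter_upwards [Ioo_mem_nhdsGT (div_pos hnp hlam)] with θ hθ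
    exact (measure_mono fun ω (hω : S ω ≤ 0) => hω.trans hθ.1.le).trans (hpos θ hθ.1 hθ.2.le)
  · exact hpos θ hθ hθ'

lemma measure_ge_le (h : IsBinomialExpCompound μ N V S n p lam) (hp0 : 0 ≤ p) (hp1 : p ≤ 1)
    (hnp : 0 < n * p) (hlam : 0 < lam) (hθ : n * p / lam ≤ θ) :
    μ {ω | θ ≤ S ω} ≤ ENNReal.ofReal (exp (-(√(θ * lam) - √(n * p)) ^ 2)) := by
  refine (measure_mono fun ω (hω : θ ≤ S ω) => ?_).trans
    (h.measure_chernoffParam_mul_le hp0 hp1 hnp hlam ((div_pos hnp hlam).trans_le hθ))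
  exact mul_le_mul_of_nonneg_left hω (chernoffParam_nonneg hlam hθ)

end IsBinomialExpCompound

theorem statement2_general {Ω : Type*} [MeasureSpace Ω]
    (n : ℕ) (hn : 0 < n) (p lam : ℝ) (hp : p ∈ Set.Ioc (0 : ℝ) 1) (hlam : 0 < lam)
    (N : Ω → ℕ) (V : ℕ → Ω → ℝ)
    (hNmeas : Measurable N) (hVmeas : ∀ i, Measurable (V i))
    (hIndep : iIndepFun
      (fun o : Option ℕ => o.elim (fun ω => (N ω : ℝ)) V) ℙ)
    (hN : ∀ m : ℕ, ℙ {ω | N ω = m}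
      = ENNReal.ofReal ((n.choose m : ℝ) * p ^ m * (1 - p) ^ (n - m)))
    (hV : ∀ i, ∀ t : ℝ, 0 ≤ t →
      ℙ {ω | t < V i ω} = ENNReal.ofReal (Real.exp (-lam * t)))
    (S : Ω → ℝ) (hS : ∀ ω, S ω = ∑ i ∈ Finset.range (N ω), V i ω)
    (θ : ℝ) (hθ : 0 ≤ θ) :
    (θ ≤ n * p / lam →
      ℙ {ω | S ω ≤ θ}
        ≤ ENNReal.ofReal (Real.exp (-(Real.sqrt (n * p) - Real.sqrt (θ * lam)) ^ 2)))
    ∧ (n * p / lam ≤ θ →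
      ℙ {ω | θ ≤ S ω}
        ≤ ENNReal.ofReal (Real.exp (-(Real.sqrt (θ * lam) - Real.sqrt (n * p)) ^ 2))) := by
  have h : IsBinomialExpCompound ℙ N V S n p lam := ⟨hNmeas, hVmeas, hIndep, hN, hV, hS⟩
  have hnp : 0 < (n : ℝ) * p := mul_pos (Nat.cast_pos.2 hn) hp.1
  exact ⟨h.measure_le_le hp.1.le hp.2 hnp hlam hθ, h.measure_ge_le hp.1.le hp.2 hnp hlam⟩

/-- Tail bounds for the Binomial–Exponential compound distribution
`S = ∑_{i=1}^N Vᵢ`, where `N ~ Binomial(n,p)` and the `Vᵢ` are exponential with rate `λ`,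
all mutually independent. -/
theorem statement2 {Ω : Type*} [MeasureSpace Ω] [IsProbabilityMeasure (ℙ : Measure Ω)]
    (n : ℕ) (hn : 0 < n) (p lam : ℝ) (hp : p ∈ Set.Ioc (0 : ℝ) 1) (hlam : 0 < lam)
    (N : Ω → ℕ) (V : ℕ → Ω → ℝ)
    (hNmeas : Measurable N) (hVmeas : ∀ i, Measurable (V i))
    (hIndep : iIndepFun
      (fun o : Option ℕ => o.elim (fun ω => (N ω : ℝ)) V) ℙ)
    (hN : ∀ m : ℕ, ℙ {ω | N ω = m}
      = ENNReal.ofReal ((n.choose m : ℝ) * p ^ m * (1 - p) ^ (n - m)))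
    (hV : ∀ i, ∀ t : ℝ, 0 ≤ t →
      ℙ {ω | t < V i ω} = ENNReal.ofReal (Real.exp (-lam * t)))
    (S : Ω → ℝ) (hS : ∀ ω, S ω = ∑ i ∈ Finset.range (N ω), V i ω)
    (θ : ℝ) (hθ : 0 ≤ θ) :
    (θ ≤ n * p / lam →
      ℙ {ω | S ω ≤ θ}
        ≤ ENNReal.ofReal (Real.exp (-(Real.sqrt (n * p) - Real.sqrt (θ * lam)) ^ 2)))
    ∧ (n * p / lam ≤ θ →
      ℙ {ω | θ ≤ S ω}
        ≤ ENNReal.ofReal (Real.exp (-(Real.sqrt (θ * lam) - Real.sqrt (n * p)) ^ 2))) :=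
  statement2_general n hn p lam hp hlam N V hNmeas hVmeas hIndep hN hV S hS θ hθ
end ChernoffParam
end

section
/- There exists γ₀ ∈ (0,1) such that for every γ ∈ (0, γ₀) the following uniform Poisson local-limit asymptotics hold: for every ε > 0 there is K < ∞ such that for all real k ≥ K, all real u > 0 with |u − √2·k| ≤ k^{3/5} and ũ := u²/k^γ ∈ ℕ, and all real x ≥ 0 with |x − u| ≤ k^{3γ/2}, writing x̃ := x²/k^γ, one has | e^{−x̃} · x̃^{ũ} / ũ! − g(x) | ≤ ε · g(x), where g(x) := ( √(k^γ) / (√(2π) · u) ) · e^{−2(x−u)²/k^γ}. -/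
/-!
Stirling's formula `n! = s_n √(2n) (n/e)^n` with `s_n → √π` turns the Poisson weight into
`(√π / s_ũ) · exp (ũ - x̃ + ũ log (x̃/ũ)) / √(2πũ)`,
and `√(2πũ) = √(2π) u / √(k^γ)`. Writing `x = u (1 + r)`, the exponent is `-2 (x - u)² / k^γ`
up to `2 u² (log (1 + r) - r + r²/2) / k^γ`, which is `O(|x - u|³ / (u k^γ)) = O(k^(7γ/2 - 1))`
and so vanishes for `γ < 2/7`.
-/

open Real Filter Topology
open scoped Nat

lemma abs_log_one_add_sub_le {t : ℝ} (ht : |t| ≤ 1 / 2) :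
    |log (1 + t) - t + t ^ 2 / 2| ≤ 2 * |t| ^ 3 := by
  have h := abs_log_sub_add_sum_range_le (x := -t) (by rw [abs_neg]; linarith) 2
  simp only [Finset.sum_range_succ, Finset.sum_range_zero, abs_neg, sub_neg_eq_add] at h
  have hden : 1 / 2 ≤ 1 - |t| := by linarith
  calc |log (1 + t) - t + t ^ 2 / 2| = |0 + (-t) ^ (0 + 1) / ((0 : ℕ) + 1)
          + (-t) ^ (1 + 1) / ((1 : ℕ) + 1) + log (1 + t)| := by congr 1; push_cast; ring
    _ ≤ |t| ^ (2 + 1) / (1 - |t|) := h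
    _ ≤ 2 * |t| ^ 3 := by
        rw [div_le_iff₀ (by linarith), pow_succ]
        nlinarith [pow_nonneg (abs_nonneg t) 3]

lemma abs_sq_sub_sq_add_mul_log_add_two_mul_sq_le {u x : ℝ} (hu : 0 < u)
    (hxu : |x - u| ≤ u / 2) :
    |u ^ 2 - x ^ 2 + u ^ 2 * log (x ^ 2 / u ^ 2) + 2 * (x - u) ^ 2| ≤ 4 * |x - u| ^ 3 / u := by
  set r := (x - u) / u with hr
  have hr_half : |r| ≤ 1 / 2 := by
    rw [hr, abs_div, abs_of_pos hu, div_le_iff₀ hu]; linarith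
  have hx : x = u * (1 + r) := by rw [hr]; field_simp; ring
  have h1r : 0 < 1 + r := by linarith [neg_abs_le r]
  have hlog : log (x ^ 2 / u ^ 2) = 2 * log (1 + r) := by
    rw [hx, mul_pow, mul_div_cancel_left₀ _ (by positivity), log_pow]; push_cast; ring
  have hrem : u ^ 2 - x ^ 2 + u ^ 2 * log (x ^ 2 / u ^ 2) + 2 * (x - u) ^ 2
      = 2 * u ^ 2 * (log (1 + r) - r + r ^ 2 / 2) := by
    rw [hlog, hx]; ring
  calc |u ^ 2 - x ^ 2 + u ^ 2 * log (x ^ 2 / u ^ 2) + 2 * (x - u) ^ 2|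
      = 2 * u ^ 2 * |log (1 + r) - r + r ^ 2 / 2| := by
        rw [hrem, abs_mul, abs_of_pos (by positivity)]
    _ ≤ 2 * u ^ 2 * (2 * |r| ^ 3) := by gcongr; exact abs_log_one_add_sub_le hr_half
    _ = 4 * |x - u| ^ 3 / u := by
        rw [hr, abs_div, abs_of_pos hu]; field_simp; ring

lemma exp_neg_mul_pow_div_factorial_eq_stirling {y : ℝ} (hy : 0 < y) {n : ℕ} (hn : n ≠ 0) :
    exp (-y) * y ^ n / n ! = √π / Stirling.stirlingSeq n * exp (n - y + n * log (y / n))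
      / √(2 * π * n) := by
  have hn0 : (0 : ℝ) < n := by positivity
  have hfact : (n ! : ℝ) = Stirling.stirlingSeq n * (√(2 * n) * (n / exp 1) ^ n) := by
    rw [Stirling.stirlingSeq, div_mul_cancel₀ _ (by positivity)]
  have hexp : exp (n - y + n * log (y / n)) = exp (-y) * (y / n) ^ n * exp 1 ^ n := by
    rw [show (n : ℝ) - y + n * log (y / n) = -y + n * log (y / n) + n * 1 by ring,
      exp_add, exp_add, exp_nat_mul, exp_nat_mul, exp_log (by positivity)]
  have hs : 0 < Stirling.stirlingSeq n := by
    rw [Stirling.stirlingSeq]; positivity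
  rw [hfact, hexp, show 2 * π * n = π * (2 * n) by ring, sqrt_mul pi_pos.le]
  field_simp
  rw [← mul_pow, ← mul_pow]
  field_simp

lemma exp_neg_mul_pow_div_factorial_eq_gaussian {h u x : ℝ} (hh : 0 < h) (hu : 0 < u)
    (hx : 0 < x) {n : ℕ} (hn : (n : ℝ) = u ^ 2 / h) :
    exp (-(x ^ 2 / h)) * (x ^ 2 / h) ^ n / (n ! : ℝ)
      = √π / Stirling.stirlingSeq n
          * exp ((u ^ 2 - x ^ 2 + u ^ 2 * log (x ^ 2 / u ^ 2) + 2 * (x - u) ^ 2) / h)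
          * (√h / (√(2 * π) * u) * exp (-2 * (x - u) ^ 2 / h)) := by
  have hn0 : n ≠ 0 := by
    rintro rfl
    exact (div_pos (pow_pos hu 2) hh).ne' (by simpa using hn.symm)
  have hratio : x ^ 2 / h / n = x ^ 2 / u ^ 2 := by rw [hn]; field_simp
  have hexp : exp (n - x ^ 2 / h + n * log (x ^ 2 / h / n))
      = exp ((u ^ 2 - x ^ 2 + u ^ 2 * log (x ^ 2 / u ^ 2) + 2 * (x - u) ^ 2) / h)
          * exp (-2 * (x - u) ^ 2 / h) := by
    rw [← exp_add, hratio, hn]; congr 1; field_simp; ring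
  have hsqrt : √(2 * π * n) = √(2 * π) * u / √h := by
    rw [hn, ← mul_div_assoc, sqrt_div' _ hh.le, sqrt_mul (by positivity), sqrt_sq hu.le]
  rw [exp_neg_mul_pow_div_factorial_eq_stirling (by positivity) hn0, hexp, hsqrt]
  field_simp

lemma abs_mul_exp_sub_one_le {a t δ : ℝ} (ha : |a - 1| ≤ δ) (ht : |t| ≤ δ) (hδ : δ ≤ 1) :
    |a * exp t - 1| ≤ 5 * δ := by
  have hexp : |exp t - 1| ≤ 2 * δ :=
    (abs_exp_sub_one_le (ht.trans hδ)).trans (by linarith)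
  have ha' : |a| ≤ 2 := by linarith [abs_sub_abs_le_abs_sub a 1, abs_one (α := ℝ)]
  calc |a * exp t - 1| = |a * (exp t - 1) + (a - 1)| := by ring_nf
    _ ≤ |a| * |exp t - 1| + |a - 1| := by rw [← abs_mul]; exact abs_add_le _ _
    _ ≤ 2 * (2 * δ) + δ := by gcongr
    _ = 5 * δ := by ring

lemma abs_poisson_sub_gaussian_le {h u x c δ : ℝ} {n : ℕ} (hh : 0 < h) (hu : 0 < u)
    (hn : (n : ℝ) = u ^ 2 / h) (hxu : |x - u| ≤ c) (hcu : 2 * c ≤ u)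
    (hstir : |√π / Stirling.stirlingSeq n - 1| ≤ δ) (hc : 4 * c ^ 3 / (u * h) ≤ δ)
    (hδ : δ ≤ 1) :
    |exp (-(x ^ 2 / h)) * (x ^ 2 / h) ^ n / (n ! : ℝ)
        - √h / (√(2 * π) * u) * exp (-2 * (x - u) ^ 2 / h)|
      ≤ 5 * δ * (√h / (√(2 * π) * u) * exp (-2 * (x - u) ^ 2 / h)) := by
  have hxu' : |x - u| ≤ u / 2 := by linarith
  have hx0 : 0 < x := by linarith [(abs_le.mp hxu').1]
  have hrem : |(u ^ 2 - x ^ 2 + u ^ 2 * log (x ^ 2 / u ^ 2) + 2 * (x - u) ^ 2) / h| ≤ δ := by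
    rw [abs_div, abs_of_pos hh, div_le_iff₀ hh]
    calc _ ≤ 4 * |x - u| ^ 3 / u := abs_sq_sub_sq_add_mul_log_add_two_mul_sq_le hu hxu'
      _ ≤ 4 * c ^ 3 / u := by gcongr
      _ = 4 * c ^ 3 / (u * h) * h := by field_simp
      _ ≤ δ * h := by gcongr
  have hG : 0 < √h / (√(2 * π) * u) * exp (-2 * (x - u) ^ 2 / h) := by positivity
  rw [exp_neg_mul_pow_div_factorial_eq_gaussian hh hu hx0 hn, ← sub_one_mul, abs_mul,
    abs_of_pos hG]
  gcongr
  exact abs_mul_exp_sub_one_le hstir hrem hδ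

lemma eventually_const_mul_rpow_le_self {p : ℝ} (hp : p < 1) (a : ℝ) :
    ∀ᶠ k : ℝ in atTop, a * k ^ p ≤ k := by
  have hlim : Tendsto (fun k : ℝ => a * k ^ (-(1 - p))) atTop (𝓝 0) := by
    simpa only [mul_zero] using (tendsto_rpow_neg_atTop (by linarith)).const_mul a
  filter_upwards [hlim.eventually_le_const one_pos, eventually_gt_atTop 0] with k hk hk0
  calc a * k ^ p = a * k ^ (-(1 - p)) * k := by
        rw [mul_assoc, ← rpow_add_one hk0.ne']; ring_nf
    _ ≤ 1 * k := by gcongr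
    _ = k := one_mul k

lemma eventually_four_mul_rpow_cube_div_le {γ δ : ℝ} (hγ : γ < 2 / 7) (hδ : 0 < δ) :
    ∀ᶠ k : ℝ in atTop, 4 * (k ^ (3 * γ / 2)) ^ 3 / (k * k ^ γ) ≤ δ := by
  have hlim : Tendsto (fun k : ℝ => 4 * k ^ (-(1 - 7 * γ / 2))) atTop (𝓝 0) := by
    simpa only [mul_zero] using (tendsto_rpow_neg_atTop (by linarith)).const_mul 4
  filter_upwards [hlim.eventually_le_const hδ, eventually_gt_atTop 0] with k hk hk0
  refine Eq.trans_le ?_ hk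
  rw [mul_div_assoc, ← rpow_natCast, ← rpow_mul hk0.le, mul_comm k, ← rpow_add_one hk0.ne',
    ← rpow_sub hk0]
  ring_nf

lemma tendsto_sqrt_pi_div_stirlingSeq :
    Tendsto (fun n => √π / Stirling.stirlingSeq n) atTop (𝓝 1) := by
  have hπ : √π ≠ 0 := (sqrt_pos.mpr pi_pos).ne'
  have h := (tendsto_const_nhds (x := √π)).div Stirling.tendsto_stirlingSeq_sqrt_pi hπ
  rwa [div_self hπ] at h

lemma le_of_abs_sub_sqrt_two_mul_le {k r u : ℝ} (hk : 0 ≤ k) (hr : 3 * r ≤ k)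
    (hu : |u - √2 * k| ≤ r) : k ≤ u := by
  have hsqrt : 4 / 3 ≤ √2 := (le_sqrt (by norm_num) (by norm_num)).mpr (by norm_num)
  have : 4 / 3 * k ≤ √2 * k := by gcongr
  linarith [(abs_le.mp hu).1]

/-- Uniform Poisson local-limit asymptotics: there is `γ₀ ∈ (0,1)` such that
for every `γ ∈ (0,γ₀)` and `ε > 0` there is `K` such that for all `k ≥ K`, all `u > 0` with
`|u − √2·k| ≤ k^{3/5}` and `ũ := u²/k^γ ∈ ℕ`, and all `x ≥ 0` with `|x − u| ≤ k^{3γ/2}`, the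
Poisson probability `e^{−x̃} x̃^{ũ}/ũ!` (with `x̃ := x²/k^γ`) equals
`(√(k^γ)/(√(2π) u)) e^{−2(x−u)²/k^γ}` up to a relative error at most `ε`. -/
theorem statement13 :
    ∃ γ₀ ∈ Set.Ioo (0 : ℝ) 1, ∀ γ ∈ Set.Ioo (0 : ℝ) γ₀, ∀ ε : ℝ, 0 < ε →
      ∃ K : ℝ, ∀ k : ℝ, K ≤ k → ∀ u : ℝ, 0 < u →
        |u - Real.sqrt 2 * k| ≤ k ^ ((3 : ℝ) / 5) →
        ∀ ut : ℕ, (ut : ℝ) = u ^ 2 / k ^ γ →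
        ∀ x : ℝ, 0 ≤ x → |x - u| ≤ k ^ (3 * γ / 2) →
        |Real.exp (-(x ^ 2 / k ^ γ)) * (x ^ 2 / k ^ γ) ^ ut / (Nat.factorial ut : ℝ)
            - Real.sqrt (k ^ γ) / (Real.sqrt (2 * Real.pi) * u)
              * Real.exp (-2 * (x - u) ^ 2 / k ^ γ)|
          ≤ ε * (Real.sqrt (k ^ γ) / (Real.sqrt (2 * Real.pi) * u)
              * Real.exp (-2 * (x - u) ^ 2 / k ^ γ)) := by
  refine ⟨1 / 4, by norm_num, fun γ ⟨hγ0, hγ⟩ ε hε => ?_⟩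
  set δ := min ε 1 / 5 with hδ
  have hδ0 : 0 < δ := by positivity
  obtain ⟨N, hN⟩ := eventually_atTop.mp
    (tendsto_sqrt_pi_div_stirlingSeq.eventually (Metric.closedBall_mem_nhds 1 hδ0))
  obtain ⟨K, hK⟩ := eventually_atTop.mp <| (eventually_ge_atTop (max 1 (N : ℝ))).and <|
    (eventually_const_mul_rpow_le_self (by norm_num : (3 : ℝ) / 5 < 1) 3).and <|
    (eventually_const_mul_rpow_le_self (by linarith : 3 * γ / 2 < 1) 2).and
    (eventually_four_mul_rpow_cube_div_le (γ := γ) (by linarith) hδ0)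
  refine ⟨K, fun k hk u hu hu_sqrt n hn x _ hxu => ?_⟩
  obtain ⟨hk_max, hk_u, hk_x, hk_rem⟩ := hK k hk
  have hk1 : 1 ≤ k := le_of_max_le_left hk_max
  have hku : k ≤ u := le_of_abs_sub_sqrt_two_mul_le (by linarith) hk_u hu_sqrt
  have hkn : k ≤ n := by
    rw [hn, le_div_iff₀ (by positivity)]
    calc k * k ^ γ ≤ k * k := by gcongr; exact rpow_le_self_of_one_le hk1 (by linarith)
      _ ≤ u ^ 2 := by nlinarith
  have hstir : |√π / Stirling.stirlingSeq n - 1| ≤ δ := by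
    rw [← Real.dist_eq, ← Metric.mem_closedBall]
    exact hN n (by exact_mod_cast (le_of_max_le_right hk_max).trans hkn)
  have hcu : 2 * k ^ (3 * γ / 2) ≤ u := by linarith
  refine (abs_poisson_sub_gaussian_le (by positivity) hu hn hxu hcu hstir ?_ ?_).trans ?_
  · exact le_trans (by gcongr) hk_rem
  · linarith [min_le_right ε 1]
  · gcongr
    linarith [min_le_left ε 1]
end

section
/- There exists γ₀ ∈ (0,1) such that for every γ ∈ (0, γ₀) the following uniform Gamma-density local-limit asymptotics hold: for every ε > 0 there is K < ∞ such that for all real k ≥ K, all real v ≥ k with ṽ := v²/k^γ a positive integer, and all real y > 0 with |y − v| ≤ k^{3γ/2}, writing ỹ := y²/k^γ, one has | (2y/k^γ) · e^{−ỹ} · ỹ^{ṽ−1} / (ṽ−1)! − h(y) | ≤ ε · h(y), where h(y) := ( 2 / √(2π k^γ) ) · e^{−2(y−v)²/k^γ}. -/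
set_option maxHeartbeats 1000000

lemma aux_log2 {u : ℝ} (h : |u| ≤ 1/2) : |Real.log (1+u) - u + u^2/2| ≤ 2*|u|^3 := by
  have h1 : |(-u : ℝ)| < 1 := by rw [abs_neg]; linarith
  have h2 := Real.abs_log_sub_add_sum_range_le h1 2
  simp [Finset.sum_range_succ] at h2
  rw [show Real.log (1+u) - u + u^2/2 = -u + u^2/(1+1) + Real.log (1+u) by ring]
  refine h2.trans ?_
  rw [div_le_iff₀ (by linarith : (0:ℝ) < 1 - |u|)]
  nlinarith [abs_nonneg u, pow_nonneg (abs_nonneg u) 3]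

lemma aux_log1 {u : ℝ} (h : |u| ≤ 1/2) : |Real.log (1+u)| ≤ 2*|u| := by
  have h1 : |(-u : ℝ)| < 1 := by rw [abs_neg]; linarith
  have h3 := Real.abs_log_sub_add_sum_range_le h1 1
  simp [Finset.sum_range_succ] at h3
  have e1 : |Real.log (1+u)| ≤ |(-u + Real.log (1+u))| + |u| := by
    have := abs_add_le (-u + Real.log (1+u)) u
    rw [show -u + Real.log (1+u) + u = Real.log (1+u) by ring] at this
    exact this
  have e2 : u^2/(1 - |u|) ≤ 2*u^2 := by
    rw [div_le_iff₀ (by linarith : (0:ℝ) < 1 - |u|)]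
    nlinarith [abs_nonneg u, sq_nonneg u]
  have e3 : 2*u^2 ≤ |u| := by nlinarith [abs_nonneg u, sq_abs u]
  linarith


lemma abs_add3' (x1 x2 x3 : ℝ) : |x1+x2+x3| ≤ |x1|+|x2|+|x3| := by
  calc |x1+x2+x3| ≤ |x1+x2| + |x3| := abs_add_le (x1+x2) x3
  _ ≤ |x1|+|x2|+|x3| := by linarith [abs_add_le x1 x2]

lemma abs_add4' (x1 x2 x3 x4 : ℝ) : |x1+x2+x3+x4| ≤ |x1|+|x2|+|x3|+|x4| := by
  calc |x1+x2+x3+x4| ≤ |x1+x2+x3| + |x4| := abs_add_le (x1+x2+x3) x4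
  _ ≤ |x1|+|x2|+|x3|+|x4| := by linarith [abs_add3' x1 x2 x3]

/-- Uniform Gamma-density local-limit asymptotics: there is `γ₀ ∈ (0,1)` such
that for every `γ ∈ (0,γ₀)` and `ε > 0` there is `K` such that for all `k ≥ K`, all `v ≥ k` with
`ṽ := v²/k^γ` a positive integer, and all `y > 0` with `|y − v| ≤ k^{3γ/2}`, the density
`(2y/k^γ) e^{−ỹ} ỹ^{ṽ−1}/(ṽ−1)!` (with `ỹ := y²/k^γ`) equals
`(2/√(2π k^γ)) e^{−2(y−v)²/k^γ}` up to a relative error at most `ε`. -/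
theorem statement14 :
    ∃ γ₀ ∈ Set.Ioo (0 : ℝ) 1, ∀ γ ∈ Set.Ioo (0 : ℝ) γ₀, ∀ ε : ℝ, 0 < ε →
      ∃ K : ℝ, ∀ k : ℝ, K ≤ k → ∀ v : ℝ, k ≤ v →
        ∀ vt : ℕ, 1 ≤ vt → (vt : ℝ) = v ^ 2 / k ^ γ →
        ∀ y : ℝ, 0 < y → |y - v| ≤ k ^ (3 * γ / 2) →
        |2 * y / k ^ γ * Real.exp (-(y ^ 2 / k ^ γ)) * (y ^ 2 / k ^ γ) ^ (vt - 1)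
              / (Nat.factorial (vt - 1) : ℝ)
            - 2 / Real.sqrt (2 * Real.pi * k ^ γ) * Real.exp (-2 * (y - v) ^ 2 / k ^ γ)|
          ≤ ε * (2 / Real.sqrt (2 * Real.pi * k ^ γ)
              * Real.exp (-2 * (y - v) ^ 2 / k ^ γ)) := by
  refine ⟨1/8, ⟨by norm_num, by norm_num⟩, ?_⟩
  rintro γ ⟨hγ0, hγ1⟩ ε hε
  set η := Real.log (1+ε) with hη_def
  have hη : 0 < η := Real.log_pos (by linarith)
  -- Stirling tail
  have hsπ : (0:ℝ) < Real.sqrt Real.pi := Real.sqrt_pos.mpr Real.pi_pos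
  have hlogtendsto : Filter.Tendsto (fun n => Real.log (Stirling.stirlingSeq n))
      Filter.atTop (nhds (Real.log (Real.sqrt Real.pi))) :=
    ((Real.continuousAt_log hsπ.ne').tendsto).comp Stirling.tendsto_stirlingSeq_sqrt_pi
  obtain ⟨N, hN⟩ := Metric.tendsto_atTop.mp hlogtendsto (η/2) (by positivity)
  set M : ℝ := max (max (1072/η) 16) ((N:ℝ)+2) with hM_def
  have hM16 : (16:ℝ) ≤ M := le_trans (le_max_right _ _) (le_max_left _ _)
  have hM0 : (0:ℝ) < M := by linarith
  refine ⟨M^8, ?_⟩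
  intro k hk v hv vt hvt1 hvt y hy hyv
  have hk0 : (0:ℝ) < k := lt_of_lt_of_le (by positivity) hk
  have hk1 : (1:ℝ) ≤ k := le_trans (one_le_pow₀ (by linarith)) hk
  -- basic quantities
  set a := k ^ γ with ha_def
  have ha0 : (0:ℝ) < a := Real.rpow_pos_of_pos hk0 γ
  have ha1 : (1:ℝ) ≤ a := by
    rw [ha_def, show (1:ℝ) = k ^ (0:ℝ) by rw [Real.rpow_zero]]
    exact Real.rpow_le_rpow_of_exponent_le hk1 (le_of_lt hγ0)
  set w := k ^ ((1:ℝ)/8) with hw_def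
  have hw0 : (0:ℝ) < w := Real.rpow_pos_of_pos hk0 _
  have hwM : M ≤ w := by
    have h1 : (M^8) ^ ((1:ℝ)/8) = M := by
      rw [← Real.rpow_natCast M 8, ← Real.rpow_mul hM0.le]
      norm_num
    rw [hw_def, ← h1]
    exact Real.rpow_le_rpow (by positivity) hk (by norm_num)
  have hw16 : (16:ℝ) ≤ w := le_trans hM16 hwM
  have hw1 : (1:ℝ) ≤ w := by linarith
  have hwη : 1072/η ≤ w := le_trans (le_trans (le_max_left _ _) (le_max_left _ _)) hwM
  have hwN : (N:ℝ)+2 ≤ w := le_trans (le_max_right _ _) hwM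
  have hk_eq : w^(8:ℕ) = k := by
    rw [hw_def, ← Real.rpow_natCast (k ^ ((1:ℝ)/8)) 8, ← Real.rpow_mul hk0.le]
    norm_num
  have haw : a ≤ w^2 := by
    have h1 : a ≤ k ^ ((1:ℝ)/4) := Real.rpow_le_rpow_of_exponent_le hk1 (by linarith)
    have h2 : w^(2:ℕ) = k ^ ((1:ℝ)/4) := by
      rw [hw_def, ← Real.rpow_natCast (k ^ ((1:ℝ)/8)) 2, ← Real.rpow_mul hk0.le]
      norm_num
    rw [h2]; exact h1
  set sa := Real.sqrt a with hsa_def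
  have hsa0 : (0:ℝ) < sa := Real.sqrt_pos.mpr ha0
  have hsa1 : (1:ℝ) ≤ sa := by
    rw [hsa_def, show (1:ℝ) = Real.sqrt 1 by rw [Real.sqrt_one]]
    exact Real.sqrt_le_sqrt ha1
  have hsa2 : sa^2 = a := Real.sq_sqrt ha0.le
  have hsaw : sa ≤ w := (Real.sqrt_le_sqrt haw).trans_eq (Real.sqrt_sq hw0.le)
  set δ := y - v with hδ_def
  have hv0 : (0:ℝ) < v := lt_of_lt_of_le hk0 hv
  have hvw : w^8 ≤ v := hk_eq ▸ hv
  have hδa : |δ| ≤ a * sa := by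
    have h1 : k ^ (3*γ/2) = a * sa := by
      rw [show 3*γ/2 = γ + γ*(1/2) by ring, Real.rpow_add hk0, Real.rpow_mul hk0.le,
        ← ha_def, hsa_def, Real.sqrt_eq_rpow]
    exact h1 ▸ hyv
  -- the integer n
  set n := vt - 1 with hn_def
  have hn_cast : (n:ℝ) = v^2/a - 1 := by
    rw [hn_def, Nat.cast_sub hvt1, Nat.cast_one, hvt]
  have hpow : ∀ i j : ℕ, i ≤ j → w^i ≤ w^j := fun i j hij => pow_le_pow_right₀ hw1 hij
  have hv1 : (1:ℝ) ≤ v := le_trans hk1 hv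
  have hv2 : v ≤ v^2 := by nlinarith
  have hvsq : w^16 ≤ v^2 := by
    calc w^16 = (w^8)^2 := by ring
    _ ≤ v^2 := pow_le_pow_left₀ (by positivity) hvw 2
  have h2w : ∀ j : ℕ, 1 ≤ j → (2:ℝ) ≤ w^j := by
    intro j hj
    calc (2:ℝ) ≤ w := by linarith
    _ = w^1 := (pow_one w).symm
    _ ≤ w^j := hpow 1 j hj
  have hv2a : 2*a ≤ v^2 := by
    calc 2*a ≤ 2*w^2 := by linarith
    _ ≤ w^14*w^2 := mul_le_mul_of_nonneg_right (h2w 14 (by norm_num)) (by positivity)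
    _ = w^16 := by ring
    _ ≤ v^2 := hvsq
  have hn_lb : v^2/(2*a) ≤ (n:ℝ) := by
    have h1 : (1:ℝ) ≤ v^2/(2*a) := (one_le_div (by positivity)).mpr hv2a
    have h2 : v^2/a = v^2/(2*a)*2 := by field_simp
    rw [hn_cast, h2]; linarith
  have hn_pos : (0:ℝ) < (n:ℝ) := lt_of_lt_of_le (by positivity) hn_lb
  have hnR1 : (1:ℝ) ≤ (n:ℝ) := by
    refine le_trans ?_ hn_lb
    exact (one_le_div (by positivity)).mpr hv2a
  have hwn : w ≤ (n:ℝ) := by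
    refine le_trans ?_ hn_lb
    rw [le_div_iff₀ (by positivity)]
    have e0 := mul_le_mul_of_nonneg_left haw hw0.le
    calc w*(2*a) ≤ w*(2*w^2) := by linarith only [e0]
    _ = 2*w^3 := by ring
    _ ≤ w^5*w^3 := mul_le_mul_of_nonneg_right (h2w 5 (by norm_num)) (by positivity)
    _ = w^8 := by ring
    _ ≤ v := hvw
    _ ≤ v^2 := hv2
  have hnN : N ≤ n := by
    have : (N:ℝ) ≤ (n:ℝ) := by linarith
    exact_mod_cast this

  -- abbreviations
  set yt := y^2/a with hyt_def
  have hyt0 : (0:ℝ) < yt := by rw [hyt_def]; positivity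
  set m := yt - (n:ℝ) with hm_def
  set u := yt/(n:ℝ) - 1 with hu_def
  have hn' : ((n:ℝ)) ≠ 0 := ne_of_gt hn_pos
  have hnu : (n:ℝ)*u = yt - (n:ℝ) := by rw [hu_def]; field_simp
  have hu_eq : u = m/(n:ℝ) := by rw [hu_def, hm_def]; field_simp
  have hm_eq : m = (2*v*δ + δ^2 + a)/a := by
    rw [hm_def, hyt_def, hn_cast, hδ_def]
    field_simp; ring
  have hδv : |δ| ≤ v := by
    refine le_trans hδa ?_
    calc a*sa ≤ w^2*w := mul_le_mul haw hsaw hsa0.le (by positivity)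
    _ = w^3 := by ring
    _ ≤ w^8 := hpow 3 8 (by norm_num)
    _ ≤ v := hvw
  have hvsa1 : (1:ℝ) ≤ v*sa := by
    have := mul_le_mul hv1 hsa1 zero_le_one (by linarith only [hv1])
    linarith only [this]
  have hm_abs : |m| ≤ 4*v*sa := by
    have h1 : m = δ*(2*v+δ)/a + 1 := by rw [hm_eq]; field_simp
    have h3 : |2*v+δ| ≤ 3*v := by
      calc |2*v+δ| ≤ |2*v| + |δ| := abs_add_le (2*v) δ
      _ = 2*v + |δ| := by rw [abs_of_pos (by linarith : (0:ℝ) < 2*v)]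
      _ ≤ 3*v := by linarith only [hδv]
    have h2 : |δ*(2*v+δ)/a| ≤ 3*v*sa := by
      rw [abs_div, abs_of_pos ha0, div_le_iff₀ ha0, abs_mul]
      calc |δ| * |2*v+δ| ≤ (a*sa)*(3*v) :=
        mul_le_mul hδa h3 (abs_nonneg _) (mul_nonneg ha0.le hsa0.le)
      _ = 3*v*sa*a := by ring
    calc |m| = |δ*(2*v+δ)/a + 1| := by rw [h1]
    _ ≤ |δ*(2*v+δ)/a| + |(1:ℝ)| := abs_add_le _ 1
    _ ≤ 3*v*sa + 1 := by rw [abs_one]; linarith only [h2]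
    _ ≤ 4*v*sa := by linarith only [hvsa1]
  have hu_abs : |u| = |m|/(n:ℝ) := by rw [hu_eq, abs_div, abs_of_pos hn_pos]
  have hasaw : a*sa ≤ w^3 := by
    calc a*sa ≤ w^2*w := mul_le_mul haw hsaw hsa0.le (by positivity)
    _ = w^3 := by ring
  have hu_w : |u| ≤ 8/w := by
    rw [hu_abs]
    have step1 : |m|/(n:ℝ) ≤ (4*v*sa)/(v^2/(2*a)) :=
      div_le_div₀ (by positivity) hm_abs (by positivity) hn_lb
    have step2 : (4*v*sa)/(v^2/(2*a)) = 8*(a*sa)/v := by field_simp; ring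
    have step3 : 8*(a*sa)/v ≤ 8/w := by
      rw [div_le_div_iff₀ hv0 hw0]
      have e0 := mul_le_mul_of_nonneg_right hasaw hw0.le
      calc 8*(a*sa)*w ≤ 8*w^3*w := by linarith only [e0]
      _ = 8*w^4 := by ring
      _ ≤ 8*w^8 := by linarith only [hpow 4 8 (by norm_num)]
      _ ≤ 8*v := by linarith only [hvw]
    linarith only [step2 ▸ step1, step3]
  have hu_half : |u| ≤ 1/2 := by
    refine hu_w.trans ?_
    rw [div_le_div_iff₀ hw0 (by norm_num : (0:ℝ) < 2)]
    linarith
  have ha3w : a^3*sa ≤ w^7 := by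
    have h1 : a^3 ≤ (w^2)^3 := pow_le_pow_left₀ ha0.le haw 3
    calc a^3*sa ≤ (w^2)^3*w := mul_le_mul h1 hsaw hsa0.le (by positivity)
    _ = w^7 := by ring
  have hnu3 : (n:ℝ)*|u|^3 ≤ 256/w := by
    have h1 : (n:ℝ)*|u|^3 = |m|^3/(n:ℝ)^2 := by rw [hu_abs]; field_simp
    have h2 : |m|^3 ≤ (4*v*sa)^3 := pow_le_pow_left₀ (abs_nonneg m) hm_abs 3
    have h3 : (v^2/(2*a))^2 ≤ (n:ℝ)^2 := pow_le_pow_left₀ (by positivity) hn_lb 2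
    have h4 : |m|^3/(n:ℝ)^2 ≤ (4*v*sa)^3/((v^2/(2*a))^2) :=
      div_le_div₀ (by positivity) h2 (by positivity) h3
    have hsa3 : sa^3 = a*sa := by rw [pow_succ, hsa2]
    have h5 : (4*v*sa)^3/((v^2/(2*a))^2) = 256*(a^3*sa)/v := by
      rw [show (4*v*sa)^3 = 64*v^3*sa^3 by ring, hsa3]
      field_simp; ring
    have h7 : 256*(a^3*sa)/v ≤ 256/w := by
      rw [div_le_div_iff₀ hv0 hw0]
      have e0 := mul_le_mul_of_nonneg_right ha3w hw0.le
      calc 256*(a^3*sa)*w ≤ 256*w^7*w := by linarith only [e0]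
      _ = 256*w^8 := by ring
      _ ≤ 256*v := by linarith only [hvw]
    rw [h1]
    linarith only [h5 ▸ h4, h7]
  -- the quadratic term
  have hn_eq2 : (n:ℝ) = (v^2-a)/a := by rw [hn_cast]; field_simp
  have hva2 : v^2/2 ≤ v^2 - a := by linarith only [hv2a]
  have hva0 : (0:ℝ) < v^2 - a := by
    have : (0:ℝ) < v^2/2 := by positivity
    linarith only [this, hva2]
  have hδ2 : δ^2 ≤ a^3 := by
    have h1 : |δ|^2 ≤ (a*sa)^2 := pow_le_pow_left₀ (abs_nonneg δ) hδa 2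
    rw [sq_abs] at h1
    calc δ^2 ≤ (a*sa)^2 := h1
    _ = a^2*sa^2 := by ring
    _ = a^3 := by rw [hsa2]; ring
  have ha3 : a ≤ a^3 := by nlinarith only [ha1, ha0, mul_le_mul ha1 ha1 zero_le_one (by linarith only [ha1] : (0:ℝ) ≤ a)]
  have hδ2a : δ^2 + a ≤ 2*a^3 := by linarith only [hδ2, ha3]
  have hδ2a0 : (0:ℝ) < δ^2 + a := by linarith only [sq_nonneg δ, ha0]
  have hid : m^2/(2*(n:ℝ)) - 2*δ^2/a =
      (4*v*δ*(δ^2+a) + (δ^2+a)^2 + 4*δ^2*a)/(2*a*(v^2-a)) := by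
    rw [hm_eq, hn_eq2]
    field_simp
    ring
  have hnum : |4*v*δ*(δ^2+a) + (δ^2+a)^2 + 4*δ^2*a| ≤ 8*v*(a^3*(a*sa)) + 8*a^6 := by
    have n1 : |4*v*δ*(δ^2+a)| ≤ 4*v*(a*sa)*(2*a^3) := by
      rw [abs_mul, abs_mul, abs_mul, abs_of_nonneg (by norm_num : (0:ℝ) ≤ 4),
        abs_of_pos hv0, abs_of_pos hδ2a0]
      have b1 : |δ| * (δ^2+a) ≤ (a*sa)*(2*a^3) :=
        mul_le_mul hδa hδ2a hδ2a0.le (mul_nonneg ha0.le hsa0.le)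
      have e := mul_le_mul_of_nonneg_left b1 (by linarith only [hv0] : (0:ℝ) ≤ 4*v)
      linarith only [e]
    have n2 : |(δ^2+a)^2| ≤ 4*a^6 := by
      rw [abs_of_nonneg (sq_nonneg _)]
      calc (δ^2+a)^2 ≤ (2*a^3)^2 := pow_le_pow_left₀ hδ2a0.le hδ2a 2
      _ = 4*a^6 := by ring
    have n3 : |4*δ^2*a| ≤ 4*a^6 := by
      rw [abs_of_nonneg (mul_nonneg (mul_nonneg (by norm_num : (0:ℝ) ≤ 4) (sq_nonneg δ)) ha0.le)]
      have e1 : a^4 ≤ a^6 := pow_le_pow_right₀ ha1 (by norm_num)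
      have e2 := mul_le_mul_of_nonneg_right hδ2 ha0.le
      linarith only [e1, e2]
    calc |4*v*δ*(δ^2+a) + (δ^2+a)^2 + 4*δ^2*a|
        ≤ |4*v*δ*(δ^2+a)| + |(δ^2+a)^2| + |4*δ^2*a| := abs_add3' _ _ _
    _ ≤ 4*v*(a*sa)*(2*a^3) + 4*a^6 + 4*a^6 := by linarith
    _ = 8*v*(a^3*(a*sa)) + 8*a^6 := by ring
  have ha5w : a^5 ≤ w^10 := by
    calc a^5 ≤ (w^2)^5 := pow_le_pow_left₀ ha0.le haw 5
    _ = w^10 := by ring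
  have hDb : |m^2/(2*(n:ℝ)) - 2*δ^2/a| ≤ 16/w := by
    rw [hid, abs_div, abs_of_pos (by positivity : (0:ℝ) < 2*a*(v^2-a))]
    have d1 : a*v^2 ≤ 2*a*(v^2-a) := by
      have e := mul_le_mul_of_nonneg_left hv2a ha0.le
      linarith only [e]
    have d2 : |4*v*δ*(δ^2+a) + (δ^2+a)^2 + 4*δ^2*a|/(2*a*(v^2-a))
        ≤ (8*v*(a^3*(a*sa)) + 8*a^6)/(a*v^2) :=
      div_le_div₀ (by positivity) hnum (by positivity) d1
    have d3 : (8*v*(a^3*(a*sa)) + 8*a^6)/(a*v^2) = 8*(a^3*sa)/v + 8*a^5/v^2 := by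
      field_simp
    have d4 : 8*(a^3*sa)/v ≤ 8/w := by
      rw [div_le_div_iff₀ hv0 hw0]
      have e0 := mul_le_mul_of_nonneg_right ha3w hw0.le
      calc 8*(a^3*sa)*w ≤ 8*w^7*w := by linarith only [e0]
      _ = 8*w^8 := by ring
      _ ≤ 8*v := by linarith only [hvw]
    have d5 : 8*a^5/v^2 ≤ 8/w := by
      rw [div_le_div_iff₀ (by positivity) hw0]
      have e0 := mul_le_mul_of_nonneg_right ha5w hw0.le
      calc 8*a^5*w ≤ 8*w^10*w := by linarith only [e0]
      _ = 8*w^11 := by ring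
      _ ≤ 8*w^16 := by linarith only [hpow 11 16 (by norm_num)]
      _ ≤ 8*v^2 := by linarith only [hvsq, hpow 11 16 (by norm_num)]
    calc |4*v*δ*(δ^2+a) + (δ^2+a)^2 + 4*δ^2*a|/(2*a*(v^2-a))
        ≤ (8*v*(a^3*(a*sa)) + 8*a^6)/(a*v^2) := d2
    _ = 8*(a^3*sa)/v + 8*a^5/v^2 := d3
    _ ≤ 8/w + 8/w := by linarith
    _ = 16/w := by ring

  -- logarithmic form
  set st := Stirling.stirlingSeq n with hst_def
  have hy' : y ≠ 0 := ne_of_gt hy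
  have ha' : a ≠ 0 := ne_of_gt ha0
  have hyt' : yt ≠ 0 := ne_of_gt hyt0
  have hfact0 : (0:ℝ) < (Nat.factorial n : ℝ) := by exact_mod_cast Nat.factorial_pos n
  set F := 2 * y / a * Real.exp (-yt) * yt ^ n / (Nat.factorial n : ℝ) with hF_def
  set H := 2 / Real.sqrt (2 * Real.pi * a) * Real.exp (-2 * δ ^ 2 / a) with hH_def
  have hne1 : 2*y/a ≠ 0 := ne_of_gt (div_pos (by linarith only [hy]) ha0)
  have hF0 : (0:ℝ) < F := by
    rw [hF_def]
    apply div_pos _ hfact0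
    exact mul_pos (mul_pos (div_pos (by linarith only [hy]) ha0) (Real.exp_pos _))
      (pow_pos hyt0 n)
  have h2πa : (0:ℝ) < 2 * Real.pi * a := by positivity
  have hH0 : (0:ℝ) < H := by
    rw [hH_def]
    exact mul_pos (div_pos two_pos (Real.sqrt_pos.mpr h2πa)) (Real.exp_pos _)
  have hlogyt : Real.log yt = 2*Real.log y - Real.log a := by
    rw [hyt_def, Real.log_div (pow_ne_zero 2 hy') ha', Real.log_pow]
    push_cast; ring
  have e1 : Real.log F = Real.log (2*y/a) + (-yt) + (n:ℝ)*Real.log yt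
      - Real.log (Nat.factorial n : ℝ) := by
    rw [hF_def, Real.log_div (mul_ne_zero (mul_ne_zero hne1 (Real.exp_ne_zero _))
        (pow_ne_zero n hyt')) hfact0.ne',
      Real.log_mul (mul_ne_zero hne1 (Real.exp_ne_zero _)) (pow_ne_zero n hyt'),
      Real.log_mul hne1 (Real.exp_ne_zero _), Real.log_exp, Real.log_pow]
  have e2 : Real.log (2*y/a) = Real.log 2 + Real.log y - Real.log a := by
    rw [Real.log_div (mul_ne_zero two_ne_zero hy') ha', Real.log_mul two_ne_zero hy']
  have hsf := Stirling.log_stirlingSeq_formula n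
  rw [← hst_def] at hsf
  have hlog2n : Real.log (2*(n:ℝ)) = Real.log 2 + Real.log (n:ℝ) :=
    Real.log_mul two_ne_zero hn'
  have hlogne : Real.log ((n:ℝ)/Real.exp 1) = Real.log (n:ℝ) - 1 := by
    rw [Real.log_div hn' (Real.exp_ne_zero 1), Real.log_exp]
  have hlogfact : Real.log (Nat.factorial n : ℝ) =
      Real.log st + (1/2)*(Real.log 2 + Real.log (n:ℝ)) + (n:ℝ)*Real.log (n:ℝ) - (n:ℝ) := by
    rw [hlog2n, hlogne] at hsf
    linear_combination (-1 : ℝ) * hsf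
  have hlogH : Real.log H = Real.log 2
      - (1/2)*(Real.log 2 + Real.log Real.pi + Real.log a) + (-2*δ^2/a) := by
    rw [hH_def, Real.log_mul (div_ne_zero two_ne_zero
        (Real.sqrt_ne_zero'.mpr h2πa)) (Real.exp_ne_zero _),
      Real.log_div two_ne_zero (Real.sqrt_ne_zero'.mpr h2πa), Real.log_exp,
      Real.log_sqrt h2πa.le, Real.log_mul (mul_ne_zero two_ne_zero Real.pi_ne_zero) ha',
      Real.log_mul two_ne_zero Real.pi_ne_zero]
    ring
  have hlog1u : Real.log (1+u) = Real.log yt - Real.log (n:ℝ) := by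
    rw [show (1:ℝ)+u = yt/(n:ℝ) by rw [hu_def]; ring, Real.log_div hyt' hn']
  have hEQ : Real.log F - Real.log H = (n:ℝ)*(Real.log (1+u) - u)
      + (1/2)*Real.log (1+u) + 2*δ^2/a + ((1/2)*Real.log Real.pi - Real.log st) := by
    rw [e1, e2, hlogfact, hlogH, hlog1u]
    linear_combination hnu - (1/2)*hlogyt
  have hmu : m^2/(2*(n:ℝ)) = (n:ℝ)*u^2/2 := by
    rw [hu_eq]; field_simp
  have hsplit : Real.log F - Real.log H =
      (n:ℝ)*(Real.log (1+u) - u + u^2/2) + (2*δ^2/a - m^2/(2*(n:ℝ)))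
      + (1/2)*Real.log (1+u) + ((1/2)*Real.log Real.pi - Real.log st) := by
    rw [hEQ, hmu]; ring
  have hb1 : |(n:ℝ)*(Real.log (1+u) - u + u^2/2)| ≤ 512/w := by
    rw [abs_mul, abs_of_pos hn_pos]
    calc (n:ℝ) * |Real.log (1+u) - u + u^2/2| ≤ (n:ℝ)*(2*|u|^3) :=
      mul_le_mul_of_nonneg_left (aux_log2 hu_half) hn_pos.le
    _ = 2*((n:ℝ)*|u|^3) := by ring
    _ ≤ 2*(256/w) := by linarith only [hnu3]
    _ = 512/w := by ring
  have hb2 : |2*δ^2/a - m^2/(2*(n:ℝ))| ≤ 16/w := by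
    rw [abs_sub_comm]; exact hDb
  have hb3 : |(1/2)*Real.log (1+u)| ≤ 8/w := by
    rw [abs_mul, abs_of_pos (by norm_num : (0:ℝ) < 1/2)]
    have := aux_log1 hu_half
    have h2 : (1/2)*|Real.log (1+u)| ≤ |u| := by linarith only [this]
    linarith only [h2, hu_w]
  have hb4 : |(1/2)*Real.log Real.pi - Real.log st| ≤ η/2 := by
    have h1 := hN n hnN
    rw [← hst_def, Real.dist_eq, Real.log_sqrt Real.pi_nonneg] at h1
    rw [abs_sub_comm, show (1/2)*Real.log Real.pi = Real.log Real.pi / 2 by ring]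
    exact h1.le
  have hwtot : 536/w ≤ η/2 := by
    rw [div_le_div_iff₀ hw0 (by norm_num : (0:ℝ) < 2)]
    rw [div_le_iff₀ hη] at hwη
    linarith only [hwη]
  have hS : |Real.log F - Real.log H| ≤ η := by
    rw [hsplit]
    calc |(n:ℝ)*(Real.log (1+u) - u + u^2/2) + (2*δ^2/a - m^2/(2*(n:ℝ)))
        + (1/2)*Real.log (1+u) + ((1/2)*Real.log Real.pi - Real.log st)|
        ≤ |(n:ℝ)*(Real.log (1+u) - u + u^2/2)| + |2*δ^2/a - m^2/(2*(n:ℝ))|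
          + |(1/2)*Real.log (1+u)| + |(1/2)*Real.log Real.pi - Real.log st| :=
      abs_add4' _ _ _ _
    _ ≤ 512/w + 16/w + 8/w + η/2 := by linarith only [hb1, hb2, hb3, hb4]
    _ = 536/w + η/2 := by ring
    _ ≤ η/2 + η/2 := by linarith only [hwtot]
    _ = η := by ring
  have hSabs := abs_le.mp hS
  have hε1 : (0:ℝ) < 1 + ε := by linarith only [hε]
  have hFle : F ≤ (1+ε)*H := by
    calc F = Real.exp (Real.log F) := (Real.exp_log hF0).symm
    _ ≤ Real.exp (Real.log H + η) := Real.exp_le_exp.mpr (by linarith only [hSabs.2])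
    _ = Real.exp (Real.log H) * Real.exp η := Real.exp_add _ _
    _ = H * (1+ε) := by rw [Real.exp_log hH0, hη_def, Real.exp_log hε1]
    _ = (1+ε)*H := by ring
  have hHle : H ≤ (1+ε)*F := by
    calc H = Real.exp (Real.log H) := (Real.exp_log hH0).symm
    _ ≤ Real.exp (Real.log F + η) := Real.exp_le_exp.mpr (by linarith only [hSabs.1])
    _ = Real.exp (Real.log F) * Real.exp η := Real.exp_add _ _
    _ = F * (1+ε) := by rw [Real.exp_log hF0, hη_def, Real.exp_log hε1]
    _ = (1+ε)*F := by ring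
  have hge : (1-ε)*H ≤ F := by
    rcases le_or_gt ε 1 with hcase | hcase
    · have e := mul_le_mul_of_nonneg_left hHle (by linarith only [hcase] : (0:ℝ) ≤ 1-ε)
      have e3 : (0:ℝ) ≤ ε^2*F := mul_nonneg (sq_nonneg ε) hF0.le
      have e2 : (1-ε)*((1+ε)*F) = F - ε^2*F := by ring
      linarith only [e, e2, e3]
    · have e : (1-ε)*H ≤ 0 :=
        mul_nonpos_of_nonpos_of_nonneg (by linarith only [hcase]) hH0.le
      linarith only [e, hF0]
  rw [abs_le]
  constructor
  · linarith only [hge]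
  · linarith only [hFle]
end
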